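/- arXiv:2511.13592 — 3 statements merged into one kernel-verified Lean document; each statement's English description precedes it below -/
import Mathlib

section
/- Let (ν_t)_{t≥0} be a nonneg sequence that is nonincreasing, let σ_t = σ_0 β^t + b with σ_0 > 0, b > 0, β ∈ (0,1), let α_t = (t+1)^{-(1/2+γ)} with γ ∈ (0,1/2), and suppose Σ_{t=0}^{T-1} α_t σ_{t+1}² ν_t ≤ C for all T and some constant C > 0. Then for all T > 2^{2/(1-2γ)}, ν_T ≤ 2C(1/2-γ) / (b² T^{1/2-γ}). In particular ν_T → 0 as T → ∞. -/
/-!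
Write `q = 1/2 - γ`, so that `α_t = (t+1)^(q-1)`. Since `σ_{t+1} ≥ b` and `ν` is nonincreasing,
every summand of the bounded sum is at least `α_t b² ν_T`, hence `ν_T b² Σ_{t<T} α_t ≤ C`.
Concavity of `x ↦ x^q` gives `(t+2)^q - (t+1)^q ≤ q α_t`, which telescopes to
`Σ_{t<T} α_t ≥ ((T+1)^q - 1)/q ≥ T^q / (2q)` as soon as `T^q > 2`, i.e. `T > 2^(1/q)`.
-/

open Filter Finset

lemma Real.add_one_rpow_sub_rpow_le {y q : ℝ} (hy : 0 < y) (hq0 : 0 ≤ q) (hq1 : q ≤ 1) :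
    (y + 1) ^ q - y ^ q ≤ q * y ^ (q - 1) := by
  have hbernoulli : (1 + 1 / y) ^ q ≤ 1 + q * (1 / y) :=
    rpow_one_add_le_one_add_mul_self (by linarith [one_div_pos.mpr hy]) hq0 hq1
  have hfactor : (y + 1) ^ q = y ^ q * (1 + 1 / y) ^ q := by
    rw [← Real.mul_rpow hy.le (by positivity)]
    field_simp
  calc (y + 1) ^ q - y ^ q
      ≤ y ^ q * (1 + q * (1 / y)) - y ^ q := by
        rw [hfactor]
        gcongr
    _ = q * y ^ (q - 1) := by
        rw [Real.rpow_sub_one hy.ne']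
        ring

lemma Real.add_one_rpow_sub_one_le_mul_sum {q : ℝ} (hq0 : 0 ≤ q) (hq1 : q ≤ 1) (T : ℕ) :
    ((T : ℝ) + 1) ^ q - 1 ≤ q * ∑ t ∈ range T, ((t : ℝ) + 1) ^ (q - 1) := by
  have htelescope := Finset.sum_range_sub (fun t : ℕ => ((t : ℝ) + 1) ^ q) T
  simp only [Nat.cast_add_one, Nat.cast_zero, zero_add, Real.one_rpow] at htelescope
  rw [← htelescope, Finset.mul_sum]
  exact sum_le_sum fun t _ => Real.add_one_rpow_sub_rpow_le (by positivity) hq0 hq1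

lemma Antitone.mul_mul_sum_le_sum {ν w s : ℕ → ℝ} {c : ℝ} (hν : Antitone ν) {T : ℕ}
    (hνT : 0 ≤ ν T) (hc : 0 ≤ c) (hw : ∀ t, 0 ≤ w t) (hs : ∀ t, c ≤ s t) :
    ν T * c * ∑ t ∈ range T, w t ≤ ∑ t ∈ range T, w t * s t * ν t := by
  rw [Finset.mul_sum]
  refine sum_le_sum fun t ht => ?_
  have hνt : ν T ≤ ν t := hν (mem_range.mp ht).le
  have hwt : 0 ≤ w t := hw t
  have hst : 0 ≤ s t := hc.trans (hs t)
  calc ν T * c * w t = w t * c * ν T := by ring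
    _ ≤ w t * s t * ν t := by
      gcongr
      exact hs t

lemma le_of_mul_mul_sum_rpow_le {x a C q : ℝ} {T : ℕ} (hx : 0 ≤ x) (ha : 0 < a) (hq0 : 0 < q)
    (hq1 : q ≤ 1) (hT : 2 < (T : ℝ) ^ q)
    (h : x * a * ∑ t ∈ range T, ((t : ℝ) + 1) ^ (q - 1) ≤ C) :
    x ≤ 2 * C * q / (a * (T : ℝ) ^ q) := by
  have hsum := Real.add_one_rpow_sub_one_le_mul_sum hq0.le hq1 T
  have hmono : (T : ℝ) ^ q ≤ ((T : ℝ) + 1) ^ q := by gcongr; linarith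
  rw [le_div_iff₀ (by positivity)]
  nlinarith [mul_le_mul_of_nonneg_left hsum (mul_nonneg hx ha.le), mul_nonneg hx ha.le]

theorem stmt15_general (ν : ℕ → ℝ) (hν0 : ∀ t, 0 ≤ ν t) (hmono : ∀ s t, s ≤ t → ν t ≤ ν s)
    (σ0 b β : ℝ) (hσ0 : 0 < σ0) (hb : 0 < b) (hβ : β ∈ Set.Ioo (0 : ℝ) 1)
    (σ : ℕ → ℝ) (hσ : σ = fun t => σ0 * β ^ t + b)
    (γ : ℝ) (hγ : γ ∈ Set.Ioo (0 : ℝ) (1 / 2))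
    (α : ℕ → ℝ) (hα : α = fun t : ℕ => ((t : ℝ) + 1) ^ (-(1 / 2 + γ)))
    (C : ℝ)
    (hsum : ∀ T : ℕ, ∑ t ∈ Finset.range T, α t * (σ (t + 1)) ^ 2 * ν t ≤ C) :
    (∀ T : ℕ, (T : ℝ) > (2 : ℝ) ^ ((2 : ℝ) / (1 - 2 * γ)) →
        ν T ≤ 2 * C * (1 / 2 - γ) / (b ^ 2 * (T : ℝ) ^ ((1 : ℝ) / 2 - γ))) ∧
      Tendsto ν atTop (nhds 0) := by
  obtain ⟨hγ0, hγ1⟩ := hγ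
  set q : ℝ := 1 / 2 - γ with hq
  have hq0 : 0 < q := by linarith
  have hq1 : q ≤ 1 := by linarith
  have hα' : α = fun t : ℕ => ((t : ℝ) + 1) ^ (q - 1) := by rw [hα, hq]; ring_nf
  have hb_le_σ : ∀ t, b ^ 2 ≤ σ (t + 1) ^ 2 := fun t => by
    rw [hσ]
    gcongr
    exact le_add_of_nonneg_left (mul_nonneg hσ0.le (pow_nonneg hβ.1.le _))
  have hrate : ∀ T : ℕ, (2 : ℝ) ^ q⁻¹ < T → ν T ≤ 2 * C * q / (b ^ 2 * (T : ℝ) ^ q) := by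
    intro T hT
    refine le_of_mul_mul_sum_rpow_le (hν0 T) (by positivity) hq0 hq1
      ((Real.rpow_inv_lt_iff_of_pos zero_le_two T.cast_nonneg hq0).mp hT) ?_
    rw [← hα']
    exact ((show Antitone ν from hmono).mul_mul_sum_le_sum (hν0 T) (sq_nonneg b)
      (fun t => by rw [hα']; positivity) hb_le_σ).trans (hsum T)
  have hexponent : (2 : ℝ) / (1 - 2 * γ) = q⁻¹ := by
    rw [inv_eq_one_div, div_eq_div_iff (by linarith) hq0.ne']
    ring
  refine ⟨fun T hT => hrate T (hexponent ▸ hT), ?_⟩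
  have hbound : Tendsto (fun T : ℕ => 2 * C * q / (b ^ 2 * (T : ℝ) ^ q)) atTop (nhds 0) :=
    tendsto_const_nhds.div_atTop <| (Tendsto.const_mul_atTop (by positivity) <|
      (tendsto_rpow_atTop hq0).comp tendsto_natCast_atTop_atTop)
  exact squeeze_zero' (Eventually.of_forall hν0)
    ((tendsto_natCast_atTop_atTop.eventually_gt_atTop _).mono hrate) hbound

/-- Rate extraction: if `ν` is nonnegative and nonincreasing, `σ_t = σ₀β^t + b`,
`α_t = (t+1)^{-(1/2+γ)}`, and `Σ_{t<T} α_t σ_{t+1}² ν_t ≤ C` for all `T`, then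
`ν_T ≤ 2C(1/2-γ)/(b² T^{1/2-γ})` for all `T > 2^{2/(1-2γ)}`, and `ν_T → 0`. -/
theorem stmt15 (ν : ℕ → ℝ) (hν0 : ∀ t, 0 ≤ ν t) (hmono : ∀ s t, s ≤ t → ν t ≤ ν s)
    (σ0 b β : ℝ) (hσ0 : 0 < σ0) (hb : 0 < b) (hβ : β ∈ Set.Ioo (0 : ℝ) 1)
    (σ : ℕ → ℝ) (hσ : σ = fun t => σ0 * β ^ t + b)
    (γ : ℝ) (hγ : γ ∈ Set.Ioo (0 : ℝ) (1 / 2))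
    (α : ℕ → ℝ) (hα : α = fun t : ℕ => ((t : ℝ) + 1) ^ (-(1 / 2 + γ)))
    (C : ℝ) (hC : 0 < C)
    (hsum : ∀ T : ℕ, ∑ t ∈ Finset.range T, α t * (σ (t + 1)) ^ 2 * ν t ≤ C) :
    (∀ T : ℕ, (T : ℝ) > (2 : ℝ) ^ ((2 : ℝ) / (1 - 2 * γ)) →
        ν T ≤ 2 * C * (1 / 2 - γ) / (b ^ 2 * (T : ℝ) ^ ((1 : ℝ) / 2 - γ))) ∧
      Tendsto ν atTop (nhds 0) :=
  stmt15_general ν hν0 hmono σ0 b β hσ0 hb hβ σ hσ γ hγ α hα C hsum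
end

section
/- Let f : ℝ → ℝ be continuous with f(x) → -∞ as |x| → ∞ and with unique global maximizer x*. Fix σ > 0, δ > 0, and M > δ. Then there exists N₀ > 0 such that for all N > N₀ and all μ with |μ| ≤ M: if μ > x* + δ then F'_{N,σ}(μ) < 0, and if μ < x* - δ then F'_{N,σ}(μ) > 0, where F_{N,σ}(μ) = E_{x ~ N(μ, σ²)}[e^{N f(x)}]. -/
/-!
Differentiating under the integral sign, `F'_{N,σ}(μ)` is a positive multiple of
`∫ (x - μ) e^{N f(x)} k(x - μ) dx`, `k` the Gaussian kernel. For `μ > x* + δ` the half-line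
`x ≥ μ` only sees values `f ≤ s < f(x*)` and contributes at most `e^{N s} ∫ |t k(t)| dt`, while
a neighbourhood of `x*` on which `f ≥ a > s` contributes a negative term of order `e^{N a}`,
which wins for large `N`. The case `μ < x* - δ` follows by the reflection `x ↦ -x`.
-/

open MeasureTheory Real Filter Set

theorem exists_lt_forall_le_of_tendsto_cocompact {X : Type*} [TopologicalSpace X] {f : X → ℝ}
    {C : Set X} {a : ℝ} (hf : Continuous f) (hlim : Tendsto f (cocompact X) atBot)
    (hC : IsClosed C) (hne : C.Nonempty) (hlt : ∀ x ∈ C, f x < a) :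
    ∃ s < a, ∀ x ∈ C, f x ≤ s := by
  obtain ⟨x₀, hx₀⟩ := hne
  obtain ⟨z, hzC, hz⟩ := hf.continuousOn.exists_isMaxOn' hC hx₀
    ((hlim.eventually (eventually_le_atBot (f x₀))).filter_mono inf_le_left)
  exact ⟨f z, hlt z hzC, fun x hx => hz hx⟩

theorem integrable_sub_mul_mul {w k : ℝ → ℝ} {B : ℝ} (hw : AEStronglyMeasurable w)
    (hwB : ∀ x, |w x| ≤ B) (hk : Integrable fun t => t * k t) (μ : ℝ) :
    Integrable fun x => (x - μ) * (w x * k (x - μ)) :=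
  ((hk.comp_sub_right μ).bdd_mul hw (ae_of_all _ hwB)).congr
    (ae_of_all _ fun x => by ring)

theorem integral_sub_mul_le {w k : ℝ → ℝ} {μ A L d a b : ℝ}
    (hint : Integrable fun x => (x - μ) * (w x * k (x - μ)))
    (hk_int : Integrable fun t => t * k t) (hw : ∀ x, 0 ≤ w x) (hk : ∀ t, 0 ≤ k t)
    (hA : ∀ x, μ ≤ x → w x ≤ A) (hL : ∀ x ∈ Icc a b, L ≤ w x * k (x - μ))
    (hab : a ≤ b) (hd : 0 ≤ d) (hbμ : b + d ≤ μ) :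
    ∫ x, (x - μ) * (w x * k (x - μ)) ≤ A * (∫ t, |t * k t|) - d * (b - a) * L := by
  have hA₀ : 0 ≤ A := (hw μ).trans (hA μ le_rfl)
  have hmajor : Integrable fun x => A * |(x - μ) * k (x - μ)| :=
    (hk_int.abs.comp_sub_right μ).const_mul A
  have hbump : Integrable ((Icc a b).indicator fun _ => d * L) :=
    (integrableOn_const measure_Icc_lt_top.ne (C := d * L)).integrable_indicator measurableSet_Icc
  calc ∫ x, (x - μ) * (w x * k (x - μ))
      ≤ ∫ x, (A * |(x - μ) * k (x - μ)| - (Icc a b).indicator (fun _ => d * L) x) := by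
        refine integral_mono hint (hmajor.sub hbump) fun x => ?_
        have hmajor_nonneg : 0 ≤ A * |(x - μ) * k (x - μ)| := by positivity
        by_cases hx : x ∈ Icc a b
        · rw [indicator_of_mem hx]
          have hxμ : x - μ ≤ -d := by linarith [hx.2]
          nlinarith [hL x hx, mul_nonneg (hw x) (hk (x - μ))]
        · rw [indicator_of_notMem hx, sub_zero]
          rcases le_or_gt μ x with hxμ | hxμ
          · calc (x - μ) * (w x * k (x - μ)) = w x * |(x - μ) * k (x - μ)| := by
                  rw [abs_of_nonneg (mul_nonneg (sub_nonneg.2 hxμ) (hk _))]; ring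
              _ ≤ A * |(x - μ) * k (x - μ)| := by gcongr; exact hA x hxμ
          · exact (mul_nonpos_of_nonpos_of_nonneg (by linarith)
              (mul_nonneg (hw x) (hk _))).trans hmajor_nonneg
    _ = A * (∫ t, |t * k t|) - d * (b - a) * L := by
        rw [integral_sub hmajor hbump, integral_const_mul,
          integral_sub_right_eq_self (fun t => |t * k t|) μ, integral_indicator_const _
          measurableSet_Icc, volume_real_Icc_of_le hab, smul_eq_mul]
        ring

theorem integral_sub_mul_comp_neg (w k : ℝ → ℝ) (μ : ℝ) :
    ∫ x, (x - -μ) * (w (-x) * k (-(x - -μ))) = -∫ x, (x - μ) * (w x * k (x - μ)) := by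
  rw [← integral_neg_eq_self, ← integral_neg]
  congr 1 with x
  simp only [neg_neg]
  ring_nf

theorem eventually_integral_sub_mul_exp_mul_neg {f k : ℝ → ℝ} {xstar s δ M : ℝ}
    (hf : Continuous f) (hk : Continuous k) (hk_pos : ∀ t, 0 < k t)
    (hk_int : Integrable fun t => t * k t) (hδ : 0 < δ) (hmax : ∀ x, f x ≤ f xstar)
    (hs : s < f xstar) (hout : ∀ x, δ ≤ |x - xstar| → f x ≤ s) :
    ∀ᶠ N in atTop, ∀ μ, |μ| ≤ M → xstar + δ < μ →
      ∫ x, (x - μ) * (exp (N * f x) * k (x - μ)) < 0 := by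
  obtain ⟨a, hsa, haf⟩ := exists_between hs
  obtain ⟨η, hη, hηδ, hfa⟩ : ∃ η > 0, η ≤ δ / 2 ∧ ∀ x ∈ Icc (xstar - η) (xstar + η), a ≤ f x := by
    obtain ⟨r, hr, hball⟩ := Metric.eventually_nhds_iff_ball.1
      ((hf.tendsto xstar).eventually (eventually_ge_nhds haf))
    refine ⟨min (r / 2) (δ / 2), by positivity, min_le_right _ _, fun x hx => hball x ?_⟩
    rw [Metric.mem_ball, Real.dist_eq, abs_lt]
    constructor <;> linarith [hx.1, hx.2, min_le_left (r / 2) (δ / 2)]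
  obtain ⟨c, hc, hkc⟩ : ∃ c > 0, ∀ t ∈ Icc (-(M + |xstar| + δ)) (M + |xstar| + δ), c ≤ k t :=
    isCompact_Icc.exists_forall_le' hk.continuousOn fun t _ => hk_pos t
  have hlarge : ∀ᶠ N in atTop, ∫ t, |t * k t| < δ * η * c * exp (N * (a - s)) :=
    ((tendsto_exp_atTop.comp (tendsto_id.atTop_mul_const (by linarith))).const_mul_atTop
      (by positivity)).eventually_gt_atTop _
  filter_upwards [hlarge, eventually_ge_atTop 0] with N hN hN₀ μ hμM hμ
  have hexp_le {y z : ℝ} (h : y ≤ z) : exp (N * y) ≤ exp (N * z) :=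
    exp_le_exp.2 (mul_le_mul_of_nonneg_left h hN₀)
  have hnear : ∀ x ∈ Icc (xstar - η) (xstar + η),
      x - μ ∈ Icc (-(M + |xstar| + δ)) (M + |xstar| + δ) := fun x hx => by
    have := abs_le.1 hμM
    constructor <;> linarith [hx.1, hx.2, le_abs_self xstar, neg_abs_le xstar]
  have hbound := integral_sub_mul_le (w := fun x => exp (N * f x)) (A := exp (N * s))
    (L := exp (N * a) * c) (d := δ / 2) (a := xstar - η) (b := xstar + η)
    (integrable_sub_mul_mul (by fun_prop) (fun x => by rw [abs_exp]; exact hexp_le (hmax x))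
      hk_int μ)
    hk_int (fun _ => (exp_pos _).le) (fun t => (hk_pos t).le)
    (fun x hx => hexp_le (hout x (by rw [abs_of_nonneg (by linarith)]; linarith)))
    (fun x hx => mul_le_mul (hexp_le (hfa x hx)) (hkc _ (hnear x hx)) hc.le (exp_pos _).le)
    (by linarith) (by linarith) (by linarith)
  have hsplit : exp (N * a) = exp (N * s) * exp (N * (a - s)) := by rw [← exp_add]; ring_nf
  calc ∫ x, (x - μ) * (exp (N * f x) * k (x - μ))
      ≤ exp (N * s) * (∫ t, |t * k t|) - δ / 2 * (xstar + η - (xstar - η)) * (exp (N * a) * c) :=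
        hbound
    _ = exp (N * s) * ((∫ t, |t * k t|) - δ * η * c * exp (N * (a - s))) := by rw [hsplit]; ring
    _ < 0 := mul_neg_of_pos_of_neg (exp_pos _) (by linarith)

theorem eventually_integral_sub_mul_exp_mul_pos {f k : ℝ → ℝ} {xstar s δ M : ℝ}
    (hf : Continuous f) (hk : Continuous k) (hk_pos : ∀ t, 0 < k t)
    (hk_int : Integrable fun t => t * k t) (hδ : 0 < δ) (hmax : ∀ x, f x ≤ f xstar)
    (hs : s < f xstar) (hout : ∀ x, δ ≤ |x - xstar| → f x ≤ s) :
    ∀ᶠ N in atTop, ∀ μ, |μ| ≤ M → μ < xstar - δ →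
      0 < ∫ x, (x - μ) * (exp (N * f x) * k (x - μ)) := by
  have hreflect := eventually_integral_sub_mul_exp_mul_neg (f := fun x => f (-x))
    (k := fun t => k (-t)) (xstar := -xstar) (M := M) (hf.comp continuous_neg)
    (hk.comp continuous_neg) (fun t => hk_pos (-t)) (by simpa using hk_int.comp_neg.neg) hδ
    (fun x => by simpa using hmax (-x)) (by simpa using hs)
    (fun x hx => hout (-x) (by rw [← abs_neg]; convert hx using 2; ring))
  filter_upwards [hreflect] with N hN μ hμM hμ
  have := hN (-μ) (by rwa [abs_neg]) (by linarith)
  rw [integral_sub_mul_comp_neg (fun x => exp (N * f x)) k μ] at this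
  linarith

theorem integrable_mul_exp_neg_sq_div {σ : ℝ} (hσ : σ ≠ 0) :
    Integrable fun t : ℝ => t * exp (-t ^ 2 / (2 * σ ^ 2)) := by
  convert integrable_mul_exp_neg_mul_sq (b := (2 * σ ^ 2)⁻¹) (by positivity) using 4 with t
  ring

theorem exp_neg_sq_div_le_of_abs_sub_lt_one {σ x m μ : ℝ} (hm : |m - μ| < 1) :
    exp (-(x - m) ^ 2 / (2 * σ ^ 2)) ≤
      exp ((2 * σ ^ 2)⁻¹) * exp (-(4 * σ ^ 2)⁻¹ * (x - μ) ^ 2) := by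
  have hsq : (x - μ) ^ 2 ≤ 2 * (x - m) ^ 2 + 2 := by
    nlinarith [sq_nonneg (x - m - (m - μ)), sq_abs (m - μ), abs_nonneg (m - μ)]
  rw [← exp_add, exp_le_exp]
  have hc : 0 ≤ (2 * σ ^ 2)⁻¹ := by positivity
  have h4 : (4 * σ ^ 2)⁻¹ = (2 * σ ^ 2)⁻¹ / 2 := by rw [div_eq_mul_inv, ← mul_inv]; ring_nf
  rw [h4, neg_div, div_eq_mul_inv]
  nlinarith [mul_le_mul_of_nonneg_left hsq hc]

theorem hasDerivAt_integral_mul_exp_neg_sq_div {w : ℝ → ℝ} {B σ : ℝ} (hσ : σ ≠ 0)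
    (hw : AEStronglyMeasurable w) (hwB : ∀ x, |w x| ≤ B) (μ : ℝ) :
    HasDerivAt (fun m => ∫ x, w x * exp (-(x - m) ^ 2 / (2 * σ ^ 2)))
      ((σ ^ 2)⁻¹ * ∫ x, (x - μ) * (w x * exp (-(x - μ) ^ 2 / (2 * σ ^ 2)))) μ := by
  have hb : 0 < (4 * σ ^ 2)⁻¹ := by positivity
  set g : ℝ → ℝ := fun t => exp (-(4 * σ ^ 2)⁻¹ * t ^ 2)
  set bound : ℝ → ℝ := fun x =>
    B * (σ ^ 2)⁻¹ * exp ((2 * σ ^ 2)⁻¹) * (|(x - μ) * g (x - μ)| + g (x - μ))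
  have hbound_int : Integrable bound :=
    (((integrable_mul_exp_neg_mul_sq hb).abs.add (integrable_exp_neg_mul_sq hb)).comp_sub_right
      μ).const_mul _
  have hderiv (x m : ℝ) : HasDerivAt (fun m => w x * exp (-(x - m) ^ 2 / (2 * σ ^ 2)))
      ((σ ^ 2)⁻¹ * ((x - m) * (w x * exp (-(x - m) ^ 2 / (2 * σ ^ 2))))) m := by
    refine (((((hasDerivAt_id' m).const_sub x).pow 2).neg.div_const (2 * σ ^ 2)).exp.const_mul
      (w x)).congr_deriv ?_
    simp only [Pi.neg_apply, Pi.pow_apply]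
    field_simp
    ring
  have hgauss_meas (m : ℝ) :
      AEStronglyMeasurable fun x => w x * exp (-(x - m) ^ 2 / (2 * σ ^ 2)) :=
    hw.mul (by fun_prop)
  have hbound (x m : ℝ) (hm : m ∈ Metric.ball μ 1) :
      ‖(σ ^ 2)⁻¹ * ((x - m) * (w x * exp (-(x - m) ^ 2 / (2 * σ ^ 2))))‖ ≤ bound x := by
    rw [Metric.mem_ball, Real.dist_eq] at hm
    have hxm : |x - m| ≤ |x - μ| + 1 := by
      linarith [abs_sub_le x μ m, abs_sub_comm m μ]
    calc ‖(σ ^ 2)⁻¹ * ((x - m) * (w x * exp (-(x - m) ^ 2 / (2 * σ ^ 2))))‖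
        = (σ ^ 2)⁻¹ * (|x - m| * (|w x| * exp (-(x - m) ^ 2 / (2 * σ ^ 2)))) := by
          simp only [norm_mul, norm_inv, norm_pow, Real.norm_eq_abs, abs_exp, sq_abs]
      _ ≤ (σ ^ 2)⁻¹ * ((|x - μ| + 1) * (B * (exp ((2 * σ ^ 2)⁻¹) * g (x - μ)))) := by
          gcongr
          · exact (abs_nonneg _).trans (hwB x)
          · exact hwB x
          · exact exp_neg_sq_div_le_of_abs_sub_lt_one hm
      _ = bound x := by
          simp only [bound, abs_mul, abs_of_pos (exp_pos _), g]
          ring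
  have hint : Integrable fun x => w x * exp (-(x - μ) ^ 2 / (2 * σ ^ 2)) := by
    refine Integrable.bdd_mul ?_ hw (ae_of_all _ hwB)
    convert (integrable_exp_neg_mul_sq (b := (2 * σ ^ 2)⁻¹) (by positivity)).comp_sub_right μ
      using 3 with x
    ring
  exact (hasDerivAt_integral_of_dominated_loc_of_deriv_le (Metric.ball_mem_nhds μ one_pos)
    (Eventually.of_forall hgauss_meas) hint (by fun_prop) (ae_of_all _ fun x m hm => hbound x m hm)
    hbound_int (ae_of_all _ fun x m _ => hderiv x m)).2.congr_deriv (integral_const_mul _ _)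

theorem stmt17_general (f : ℝ → ℝ) (hf : Continuous f)
    (hlim : Tendsto f (comap (fun x => |x|) atTop) atBot)
    (xstar : ℝ) (hmax : ∀ x, x ≠ xstar → f x < f xstar)
    (σ δ M : ℝ) (hσ : 0 < σ) (hδ : 0 < δ)
    (F : ℝ → ℝ → ℝ)
    (hF : F = fun N μ =>
      (2 * Real.pi * σ ^ 2) ^ (-(1 : ℝ) / 2) *
        ∫ x : ℝ, Real.exp (N * f x) * Real.exp (-(x - μ) ^ 2 / (2 * σ ^ 2))) :
    ∃ N₀ > (0 : ℝ), ∀ N > N₀, ∀ μ : ℝ, |μ| ≤ M →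
      (μ > xstar + δ → deriv (F N) μ < 0) ∧
      (μ < xstar - δ → deriv (F N) μ > 0) := by
  have hle (x : ℝ) : f x ≤ f xstar := by
    rcases eq_or_ne x xstar with rfl | hx
    exacts [le_rfl, (hmax x hx).le]
  obtain ⟨s, hs, hout⟩ := exists_lt_forall_le_of_tendsto_cocompact (C := {x | δ ≤ |x - xstar|}) hf
    (by rwa [cocompact_eq_atBot_atTop, ← comap_abs_atTop]) (isClosed_le (by fun_prop) (by fun_prop))
    ⟨xstar + δ, by simp [abs_of_pos hδ]⟩
    (fun x hx => hmax x (by rintro rfl; simp at hx; linarith))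
  have hk := integrable_mul_exp_neg_sq_div hσ.ne'
  obtain ⟨N₁, hN₁⟩ := eventually_atTop.1 <|
    (eventually_integral_sub_mul_exp_mul_neg (M := M) hf (by fun_prop) (fun _ => exp_pos _) hk hδ
      hle hs hout).and
    (eventually_integral_sub_mul_exp_mul_pos (M := M) hf (by fun_prop) (fun _ => exp_pos _) hk hδ
      hle hs hout)
  refine ⟨max N₁ 1, by positivity, fun N hN μ hμ => ?_⟩
  have hN₀ : 0 ≤ N := by linarith [le_max_right N₁ 1]
  obtain ⟨hneg, hpos⟩ := hN₁ N (by linarith [le_max_left N₁ 1])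
  have hC : 0 < (2 * π * σ ^ 2) ^ (-(1 : ℝ) / 2) := by positivity
  have hderiv : deriv (F N) μ = (2 * π * σ ^ 2) ^ (-(1 : ℝ) / 2) * ((σ ^ 2)⁻¹ *
      ∫ x, (x - μ) * (exp (N * f x) * exp (-(x - μ) ^ 2 / (2 * σ ^ 2)))) := by
    subst hF
    exact ((hasDerivAt_integral_mul_exp_neg_sq_div hσ.ne' (by fun_prop)
      (fun x => by rw [abs_exp]; exact exp_le_exp.2 (mul_le_mul_of_nonneg_left (hle x) hN₀))
      μ).const_mul _).deriv
  rw [hderiv]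
  exact ⟨fun h => mul_neg_of_pos_of_neg hC (mul_neg_of_pos_of_neg (by positivity) (hneg μ hμ h)),
    fun h => mul_pos hC (mul_pos (by positivity) (hpos μ hμ h))⟩

/-- One-dimensional version of the stationary-point localization theorem: for large `N`,
on the ball `|μ| ≤ M`, the derivative of `F_{N,σ}` is negative to the right of `x* + δ`
and positive to the left of `x* - δ`. -/
theorem stmt17 (f : ℝ → ℝ) (hf : Continuous f)
    (hlim : Tendsto f (comap (fun x => |x|) atTop) atBot)
    (xstar : ℝ) (hmax : ∀ x, x ≠ xstar → f x < f xstar)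
    (σ δ M : ℝ) (hσ : 0 < σ) (hδ : 0 < δ) (hM : δ < M)
    (F : ℝ → ℝ → ℝ)
    (hF : F = fun N μ =>
      (2 * Real.pi * σ ^ 2) ^ (-(1 : ℝ) / 2) *
        ∫ x : ℝ, Real.exp (N * f x) * Real.exp (-(x - μ) ^ 2 / (2 * σ ^ 2))) :
    ∃ N₀ > (0 : ℝ), ∀ N > N₀, ∀ μ : ℝ, |μ| ≤ M →
      (μ > xstar + δ → deriv (F N) μ < 0) ∧
      (μ < xstar - δ → deriv (F N) μ > 0) :=
  stmt17_general f hf hlim xstar hmax σ δ M hσ hδ F hF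
end

section
/- Let f : ℝ^d → ℝ be continuous, bounded above with supremum f* attained at x*, and Lipschitz with constant L_f. Fix N > 0 and a schedule σ_t = σ_0 β^t + b with β ∈ (0,1), b, σ_0 > 0. Define F_σ(μ) = E_{ε ~ N(0,I_d)}[e^{N f(μ + σε)}]. Then for every μ ∈ ℝ^d and t ≥ 0, F_{σ_{t+1}}(μ) ≥ F_{σ_t}(μ) - σ_0 C (1-β) β^t, where C = √2 (Γ((d+1)/2)/Γ(d/2)) N e^{N f*} L_f. -/
/-!
Since `exp` is `e^M`-Lipschitz on `(-∞, M]`, the map `x ↦ e^{N f(x)}` is `N e^{N f*} L_f`-Lipschitz,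
so changing the noise level from `σ₂` to `σ₁` moves the integrand `e^{N f(μ + σ ε)}` by at most
`N e^{N f*} L_f |σ₁ - σ₂| ‖ε‖`. Integrating against the standard Gaussian bounds
`F_{σ₁}(μ) - F_{σ₂}(μ)` by `N e^{N f*} L_f |σ₁ - σ₂| E‖ε‖`, where `E‖ε‖ = √2 Γ((d+1)/2) / Γ(d/2)`
by polar coordinates; finally `σ_t - σ_{t+1} = σ₀ (1 - β) β^t`.
-/

open MeasureTheory Real Module

lemma abs_exp_sub_exp_le_of_le {a b M : ℝ} (ha : a ≤ M) (hb : b ≤ M) :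
    |exp a - exp b| ≤ exp M * |a - b| := by
  wlog hab : b ≤ a generalizing a b
  · rw [abs_sub_comm, abs_sub_comm a]
    exact this hb ha (le_of_not_ge hab)
  have htangent : exp a * (1 + (b - a)) ≤ exp b := by
    rw [show exp b = exp a * exp (b - a) by rw [← exp_add]; ring_nf]
    exact mul_le_mul_of_nonneg_left (by linarith [add_one_le_exp (b - a)]) (exp_pos a).le
  calc |exp a - exp b| = exp a - exp b := abs_of_nonneg (sub_nonneg.2 (exp_le_exp.2 hab))
    _ ≤ exp a * (a - b) := by linarith
    _ ≤ exp M * (a - b) := mul_le_mul_of_nonneg_right (exp_le_exp.2 ha) (sub_nonneg.2 hab)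
    _ = exp M * |a - b| := by rw [abs_of_nonneg (sub_nonneg.2 hab)]

lemma abs_exp_mul_sub_exp_mul_le {E : Type*} [SeminormedAddCommGroup E] {f : E → ℝ} {L M N : ℝ}
    (hf : ∀ x y, |f x - f y| ≤ L * ‖x - y‖) (hM : ∀ x, f x ≤ M) (hN : 0 ≤ N) (x y : E) :
    |exp (N * f x) - exp (N * f y)| ≤ N * exp (N * M) * L * ‖x - y‖ :=
  calc |exp (N * f x) - exp (N * f y)| ≤ exp (N * M) * |N * f x - N * f y| :=
        abs_exp_sub_exp_le_of_le (mul_le_mul_of_nonneg_left (hM x) hN)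
          (mul_le_mul_of_nonneg_left (hM y) hN)
    _ = exp (N * M) * N * |f x - f y| := by rw [← mul_sub, abs_mul, abs_of_nonneg hN, mul_assoc]
    _ ≤ exp (N * M) * N * (L * ‖x - y‖) := mul_le_mul_of_nonneg_left (hf x y) (by positivity)
    _ = N * exp (N * M) * L * ‖x - y‖ := by ring

lemma continuous_of_abs_sub_le_mul_norm {E : Type*} [SeminormedAddCommGroup E] {g : E → ℝ} {K : ℝ}
    (hg : ∀ x y, |g x - g y| ≤ K * ‖x - y‖) : Continuous g := by
  refine (LipschitzWith.of_dist_le_mul (K := K.toNNReal) fun x y => ?_).continuous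
  rw [Real.dist_eq, dist_eq_norm]
  exact (hg x y).trans (mul_le_mul_of_nonneg_right (le_coe_toNNReal K) (norm_nonneg _))

lemma integral_comp_add_smul_sub_integral_le {E : Type*} [NormedAddCommGroup E] [NormedSpace ℝ E]
    [MeasurableSpace E] [OpensMeasurableSpace E] {γ : Measure E} [IsFiniteMeasure γ]
    (hγ : Integrable (fun ε => ‖ε‖) γ) {g : E → ℝ} {K B : ℝ}
    (hg : ∀ x y, |g x - g y| ≤ K * ‖x - y‖) (hB : ∀ x, |g x| ≤ B) (μ : E) (s₁ s₂ : ℝ) :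
    ∫ ε, g (μ + s₁ • ε) ∂γ - ∫ ε, g (μ + s₂ • ε) ∂γ ≤ K * |s₁ - s₂| * ∫ ε, ‖ε‖ ∂γ := by
  have hint (s : ℝ) : Integrable (fun ε => g (μ + s • ε)) γ :=
    .of_bound ((continuous_of_abs_sub_le_mul_norm hg).comp (by fun_prop)).aestronglyMeasurable B
      (ae_of_all _ fun ε => hB _)
  rw [← integral_sub (hint s₁) (hint s₂), ← integral_const_mul]
  refine integral_mono ((hint s₁).sub (hint s₂)) (hγ.const_mul _) fun ε => ?_
  calc g (μ + s₁ • ε) - g (μ + s₂ • ε) ≤ |g (μ + s₁ • ε) - g (μ + s₂ • ε)| := le_abs_self _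
    _ ≤ K * ‖(μ + s₁ • ε) - (μ + s₂ • ε)‖ := hg _ _
    _ = K * |s₁ - s₂| * ‖ε‖ := by
      rw [add_sub_add_left_eq_sub, ← sub_smul, norm_smul, Real.norm_eq_abs, mul_assoc]

lemma integral_withDensity_ofReal {X F : Type*} [MeasurableSpace X] [NormedAddCommGroup F]
    [NormedSpace ℝ F] {μ : Measure X} {ρ : X → ℝ} (hρ : Measurable ρ) (hρ₀ : ∀ x, 0 ≤ ρ x)
    (g : X → F) :
    ∫ x, g x ∂μ.withDensity (fun x => ENNReal.ofReal (ρ x)) = ∫ x, ρ x • g x ∂μ := by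
  rw [integral_withDensity_eq_integral_toReal_smul hρ.ennreal_ofReal
    (ae_of_all _ fun _ => ENNReal.ofReal_lt_top)]
  simp only [ENNReal.toReal_ofReal (hρ₀ _)]

lemma integrable_withDensity_ofReal_iff {X F : Type*} [MeasurableSpace X] [NormedAddCommGroup F]
    [NormedSpace ℝ F] {μ : Measure X} {ρ : X → ℝ} (hρ : Measurable ρ) (hρ₀ : ∀ x, 0 ≤ ρ x)
    {g : X → F} :
    Integrable g (μ.withDensity fun x => ENNReal.ofReal (ρ x)) ↔
      Integrable (fun x => ρ x • g x) μ := by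
  rw [integrable_withDensity_iff_integrable_smul' hρ.ennreal_ofReal
    (ae_of_all _ fun _ => ENNReal.ofReal_lt_top)]
  simp only [ENNReal.toReal_ofReal (hρ₀ _)]

lemma integral_Ioi_pow_mul_exp_neg_sq_div_two (n : ℕ) :
    ∫ r in Set.Ioi (0 : ℝ), r ^ n * exp (-r ^ 2 / 2) =
      2 ^ (((n : ℝ) - 1) / 2) * Gamma ((n + 1) / 2) := by
  have h := integral_rpow_mul_exp_neg_mul_rpow two_pos
    (lt_of_lt_of_le neg_one_lt_zero (Nat.cast_nonneg n)) (one_half_pos (α := ℝ))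
  have hpow : (1 / 2 : ℝ) ^ (-((n : ℝ) + 1) / 2) * (1 / 2) = 2 ^ (((n : ℝ) - 1) / 2) := by
    rw [one_div, ← rpow_neg_one 2, ← rpow_mul zero_le_two, ← rpow_add two_pos]
    congr 1
    ring
  rw [← hpow, ← h]
  refine setIntegral_congr_fun measurableSet_Ioi fun r _ => ?_
  rw [rpow_natCast, rpow_two]
  ring_nf

noncomputable def stdGaussianPDFReal {E : Type*} [NormedAddCommGroup E] [InnerProductSpace ℝ E]
    (x : E) : ℝ :=
  (2 * π) ^ (-(finrank ℝ E : ℝ) / 2) * exp (-‖x‖ ^ 2 / 2)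

lemma stdGaussianPDFReal_pos {E : Type*} [NormedAddCommGroup E] [InnerProductSpace ℝ E] (x : E) :
    0 < stdGaussianPDFReal x := by
  unfold stdGaussianPDFReal; positivity

lemma continuous_stdGaussianPDFReal {E : Type*} [NormedAddCommGroup E] [InnerProductSpace ℝ E] :
    Continuous (stdGaussianPDFReal : E → ℝ) := by
  unfold stdGaussianPDFReal; fun_prop

section StdGaussian

variable {E : Type*} [NormedAddCommGroup E] [InnerProductSpace ℝ E] [FiniteDimensional ℝ E]
  [MeasurableSpace E] [BorelSpace E]

lemma integrable_exp_neg_mul_sq_norm {a : ℝ} (ha : 0 < a) :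
    Integrable (fun x : E => exp (-a * ‖x‖ ^ 2)) := by
  refine (GaussianFourier.integrable_cexp_neg_mul_sq_norm_add (V := E) (b := a)
    (by simpa using ha) 0 0).norm.congr (ae_of_all _ fun x => ?_)
  dsimp only
  rw [Complex.norm_exp, zero_mul, add_zero, ← Complex.ofReal_pow, ← Complex.ofReal_neg,
    ← Complex.ofReal_mul, Complex.ofReal_re]

lemma integrable_stdGaussianPDFReal : Integrable (stdGaussianPDFReal : E → ℝ) := by
  refine ((integrable_exp_neg_mul_sq_norm one_half_pos).const_mul
    ((2 * π) ^ (-(finrank ℝ E : ℝ) / 2))).congr (ae_of_all _ fun x => ?_)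
  simp only [stdGaussianPDFReal]
  ring_nf

lemma integrable_stdGaussianPDFReal_mul_norm :
    Integrable (fun x : E => stdGaussianPDFReal x * ‖x‖) := by
  refine ((integrable_exp_neg_mul_sq_norm (E := E) (a := 1 / 4) (by norm_num)).const_mul
    ((2 * π) ^ (-(finrank ℝ E : ℝ) / 2))).mono'
    ((continuous_stdGaussianPDFReal.mul continuous_norm).aestronglyMeasurable)
    (ae_of_all _ fun x => ?_)
  have hnorm : ‖x‖ ≤ exp (‖x‖ ^ 2 / 4) := by
    nlinarith [add_one_le_exp (‖x‖ ^ 2 / 4), sq_nonneg (‖x‖ / 2 - 1)]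
  rw [Real.norm_of_nonneg (mul_nonneg (stdGaussianPDFReal_pos x).le (norm_nonneg x))]
  calc stdGaussianPDFReal x * ‖x‖ ≤ stdGaussianPDFReal x * exp (‖x‖ ^ 2 / 4) :=
        mul_le_mul_of_nonneg_left hnorm (stdGaussianPDFReal_pos x).le
    _ = (2 * π) ^ (-(finrank ℝ E : ℝ) / 2) * exp (-(1 / 4) * ‖x‖ ^ 2) := by
        rw [stdGaussianPDFReal, mul_assoc, ← exp_add]
        ring_nf

/-- The polar-coordinates form `d · vol(B(0,1)) · ∫₀^∞ r^d e^{-r²/2} dr`, where `d = dim E`. -/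
lemma integral_exp_neg_sq_norm_div_two_mul_norm [Nontrivial E] :
    ∫ x : E, exp (-‖x‖ ^ 2 / 2) * ‖x‖ = finrank ℝ E * (√π ^ finrank ℝ E /
      Gamma (finrank ℝ E / 2 + 1)) * (2 ^ (((finrank ℝ E : ℝ) - 1) / 2) *
        Gamma ((finrank ℝ E + 1) / 2)) := by
  have hd : 0 < finrank ℝ E := finrank_pos
  have hball : volume.real (Metric.ball (0 : E) 1) =
      √π ^ finrank ℝ E / Gamma (finrank ℝ E / 2 + 1) := by
    rw [measureReal_def, InnerProductSpace.volume_ball, ENNReal.ofReal_one, one_pow, one_mul,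
      ENNReal.toReal_ofReal (by positivity)]
  have hradial : ∫ r in Set.Ioi (0 : ℝ), r ^ (finrank ℝ E - 1) • (exp (-r ^ 2 / 2) * r) =
      ∫ r in Set.Ioi (0 : ℝ), r ^ finrank ℝ E * exp (-r ^ 2 / 2) := by
    refine setIntegral_congr_fun measurableSet_Ioi fun r _ => ?_
    rw [smul_eq_mul, mul_comm (exp _), ← mul_assoc, ← pow_succ, Nat.sub_add_cancel hd]
  rw [integral_fun_norm_addHaar volume (fun r => exp (-r ^ 2 / 2) * r), hball, hradial,
    integral_Ioi_pow_mul_exp_neg_sq_div_two, nsmul_eq_mul, smul_eq_mul, mul_assoc]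

lemma integral_stdGaussianPDFReal_mul_norm :
    ∫ x : E, stdGaussianPDFReal x * ‖x‖ =
      √2 * (Gamma ((finrank ℝ E + 1) / 2) / Gamma (finrank ℝ E / 2)) := by
  rcases subsingleton_or_nontrivial E with hE | hE
  · -- both sides vanish, the right one because `Gamma 0 = 0` in Mathlib
    have hnorm (x : E) : ‖x‖ = 0 := by rw [Subsingleton.elim x 0, norm_zero]
    simp [hnorm, finrank_zero_of_subsingleton]
  simp_rw [stdGaussianPDFReal, mul_assoc]
  rw [integral_const_mul, integral_exp_neg_sq_norm_div_two_mul_norm]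
  set d := finrank ℝ E
  have hd : (0 : ℝ) < d := Nat.cast_pos.2 finrank_pos
  have hπ : √π ^ d * π ^ (-(d : ℝ) / 2) = 1 := by
    rw [sqrt_eq_rpow, ← rpow_natCast, ← rpow_mul pi_pos.le, ← rpow_add pi_pos]
    ring_nf
    exact rpow_zero π
  have htwo : 2 ^ (-(d : ℝ) / 2) * 2 ^ (((d : ℝ) - 1) / 2) * 2 = √2 := by
    rw [← rpow_add two_pos, ← rpow_add_one two_ne_zero, sqrt_eq_rpow]
    ring_nf
  rw [Gamma_add_one (by positivity), mul_rpow zero_le_two pi_pos.le]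
  calc _ = (√π ^ d * π ^ (-(d : ℝ) / 2)) * (2 ^ (-(d : ℝ) / 2) * 2 ^ (((d : ℝ) - 1) / 2) * 2) *
        (Gamma ((d + 1) / 2) / Gamma (d / 2)) := by
        field_simp
    _ = _ := by rw [hπ, htwo, one_mul]

lemma isFiniteMeasure_withDensity_stdGaussianPDFReal :
    IsFiniteMeasure (volume.withDensity fun x : E => ENNReal.ofReal (stdGaussianPDFReal x)) :=
  isFiniteMeasure_withDensity_ofReal integrable_stdGaussianPDFReal.hasFiniteIntegral

lemma integrable_norm_withDensity_stdGaussianPDFReal :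
    Integrable (fun x : E => ‖x‖)
      (volume.withDensity fun x => ENNReal.ofReal (stdGaussianPDFReal x)) :=
  (integrable_withDensity_ofReal_iff continuous_stdGaussianPDFReal.measurable
    fun x => (stdGaussianPDFReal_pos x).le).2 integrable_stdGaussianPDFReal_mul_norm

lemma integral_norm_withDensity_stdGaussianPDFReal :
    ∫ x : E, ‖x‖ ∂(volume.withDensity fun x => ENNReal.ofReal (stdGaussianPDFReal x)) =
      √2 * (Gamma ((finrank ℝ E + 1) / 2) / Gamma (finrank ℝ E / 2)) := by
  rw [integral_withDensity_ofReal continuous_stdGaussianPDFReal.measurable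
    fun x => (stdGaussianPDFReal_pos x).le, ← integral_stdGaussianPDFReal_mul_norm]
  simp only [smul_eq_mul]

end StdGaussian

theorem stmt19_general (d : ℕ) (f : EuclideanSpace ℝ (Fin d) → ℝ) (Lf fstar : ℝ)
    (hLip : ∀ x y, |f x - f y| ≤ Lf * ‖x - y‖)
    (hub : ∀ x, f x ≤ fstar)
    (N σ0 b β : ℝ) (hN : 0 < N) (hσ0 : 0 < σ0)
    (hβ : β ∈ Set.Ioo (0 : ℝ) 1)
    (σ : ℕ → ℝ) (hσ : σ = fun t => σ0 * β ^ t + b)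
    (γ : Measure (EuclideanSpace ℝ (Fin d)))
    (hγ : γ = MeasureTheory.volume.withDensity
      (fun ε => ENNReal.ofReal
        ((2 * Real.pi) ^ (-(d : ℝ) / 2) * Real.exp (-‖ε‖ ^ 2 / 2))))
    (F : ℝ → EuclideanSpace ℝ (Fin d) → ℝ)
    (hF : F = fun s μ => ∫ ε, Real.exp (N * f (μ + s • ε)) ∂γ)
    (C : ℝ)
    (hC : C = Real.sqrt 2 * (Real.Gamma (((d : ℝ) + 1) / 2) / Real.Gamma ((d : ℝ) / 2)) *
      N * Real.exp (N * fstar) * Lf)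
    (μ : EuclideanSpace ℝ (Fin d)) (t : ℕ) :
    F (σ (t + 1)) μ ≥ F (σ t) μ - σ0 * C * (1 - β) * β ^ t := by
  have hγ_std : γ = volume.withDensity fun x => ENNReal.ofReal (stdGaussianPDFReal x) := by
    simp only [hγ, stdGaussianPDFReal, finrank_euclideanSpace_fin]
  have : IsFiniteMeasure γ := hγ_std ▸ isFiniteMeasure_withDensity_stdGaussianPDFReal
  have hbound (x : EuclideanSpace ℝ (Fin d)) : |exp (N * f x)| ≤ exp (N * fstar) := by
    rw [abs_of_pos (exp_pos _)]
    exact exp_le_exp.2 (mul_le_mul_of_nonneg_left (hub x) hN.le)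
  have hdrift := integral_comp_add_smul_sub_integral_le
    (hγ_std ▸ integrable_norm_withDensity_stdGaussianPDFReal)
    (abs_exp_mul_sub_exp_mul_le hLip hub hN.le) hbound μ (σ t) (σ (t + 1))
  have hstep : σ t - σ (t + 1) = σ0 * (1 - β) * β ^ t := by
    rw [hσ]
    ring
  have hstep_nonneg : 0 ≤ σ0 * (1 - β) * β ^ t :=
    mul_nonneg (mul_nonneg hσ0.le (sub_nonneg.2 hβ.2.le)) (pow_nonneg hβ.1.le t)
  have hmoment : ∫ ε, ‖ε‖ ∂γ =
      √2 * (Gamma (((d : ℝ) + 1) / 2) / Gamma ((d : ℝ) / 2)) := by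
    rw [hγ_std, integral_norm_withDensity_stdGaussianPDFReal, finrank_euclideanSpace_fin]
  rw [hstep, abs_of_nonneg hstep_nonneg, hmoment] at hdrift
  rw [hF, hC]
  linarith

/-- Drift bound along the schedule: for `f` continuous, `L_f`-Lipschitz, with supremum `f*`
attained at `x*`, and `F_σ(μ) = E_{ε ~ N(0,I_d)}[e^{N f(μ + σε)}]`,
`F_{σ_{t+1}}(μ) ≥ F_{σ_t}(μ) - σ₀ C (1-β) β^t` where
`C = √2 (Γ((d+1)/2)/Γ(d/2)) N e^{N f*} L_f` and `σ_t = σ₀ β^t + b`. -/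
theorem stmt19 (d : ℕ) (f : EuclideanSpace ℝ (Fin d) → ℝ) (Lf fstar : ℝ)
    (hf : Continuous f)
    (hLip : ∀ x y, |f x - f y| ≤ Lf * ‖x - y‖)
    (xstar : EuclideanSpace ℝ (Fin d)) (hfs : f xstar = fstar)
    (hub : ∀ x, f x ≤ fstar)
    (N σ0 b β : ℝ) (hN : 0 < N) (hσ0 : 0 < σ0) (hb : 0 < b)
    (hβ : β ∈ Set.Ioo (0 : ℝ) 1)
    (σ : ℕ → ℝ) (hσ : σ = fun t => σ0 * β ^ t + b)
    (γ : Measure (EuclideanSpace ℝ (Fin d)))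
    (hγ : γ = MeasureTheory.volume.withDensity
      (fun ε => ENNReal.ofReal
        ((2 * Real.pi) ^ (-(d : ℝ) / 2) * Real.exp (-‖ε‖ ^ 2 / 2))))
    (F : ℝ → EuclideanSpace ℝ (Fin d) → ℝ)
    (hF : F = fun s μ => ∫ ε, Real.exp (N * f (μ + s • ε)) ∂γ)
    (C : ℝ)
    (hC : C = Real.sqrt 2 * (Real.Gamma (((d : ℝ) + 1) / 2) / Real.Gamma ((d : ℝ) / 2)) *
      N * Real.exp (N * fstar) * Lf)
    (μ : EuclideanSpace ℝ (Fin d)) (t : ℕ) :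
    F (σ (t + 1)) μ ≥ F (σ t) μ - σ0 * C * (1 - β) * β ^ t :=
  stmt19_general d f Lf fstar hLip hub N σ0 b β hN hσ0 hβ σ hσ γ hγ F hF C hC μ t
end
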